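/- arXiv:1805.02362 — 2 statements merged into one kernel-verified Lean document; each statement's English description precedes it below -/
import Mathlib

section
/- For every positive integer k and all complex scalars c_1, c_2, …, c_k with c_1 = 1 and c_k ≠ 0, the operator c_1 B + c_2 B² + ⋯ + c_k B^k is not a compact operator on H. -/
/-!
Since `B Φₙ` is a positive multiple of `Φₙ₊₁` with weights `√((1 - q^{n+1})/(1 - q)) ≥ 1`, the
operator `T = ∑ cᵢ Bⁱ` sends `Φₙ` to a vector supported on the coordinates `n + 1, …, n + k`, whose
coordinate `n + k` has modulus at least `|c_k|`. Hence the images of `Φ₀, Φ_k, Φ_{2k}, …` stay at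
mutual distance `≥ |c_k| > 0`: a bounded sequence whose image has no Cauchy subsequence, which a
compact operator forbids.
-/

noncomputable section

abbrev H2 : Type := lp (fun _ : ℕ => ℂ) 2

def Phi (n : ℕ) : H2 := lp.single 2 n 1

open Finset

theorem IsCompactOperator.not_forall_le_dist_apply {𝕜 E F : Type*} [NontriviallyNormedField 𝕜]
    [SeminormedAddCommGroup E] [NormedSpace 𝕜 E] [NormedAddCommGroup F] [NormedSpace 𝕜 F]
    {T : E →L[𝕜] F} (hT : IsCompactOperator T) {x : ℕ → E}
    (hx : Bornology.IsBounded (Set.range x)) {ε : ℝ} (hε : 0 < ε) :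
    ¬ ∀ i j, i < j → ε ≤ dist (T (x i)) (T (x j)) := by
  intro hsep
  obtain ⟨K, hK, hxK⟩ := IsCompactOperator.image_subset_compact_of_bounded
    (f := (T : E →ₗ[𝕜] F)) hT hx
  obtain ⟨y, -, φ, hφ, hlim⟩ :=
    hK.tendsto_subseq fun n => hxK ⟨x n, Set.mem_range_self n, rfl⟩
  obtain ⟨N, hN⟩ := Metric.cauchySeq_iff'.mp hlim.cauchySeq ε hε
  have hclose := hN (N + 1) N.le_succ
  rw [dist_comm] at hclose
  exact (hsep _ _ (hφ N.lt_succ_self)).not_gt hclose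

theorem Phi_apply (n j : ℕ) : Phi n j = if j = n then 1 else 0 := by
  simp [Phi, Pi.single_apply]

theorem norm_Phi (n : ℕ) : ‖Phi n‖ = 1 := by
  simp [Phi, lp.norm_single]

def IsWeightedShift (w : ℕ → ℂ) (B : H2 →L[ℂ] H2) : Prop :=
  ∀ n, B (Phi n) = w n • Phi (n + 1)

namespace IsWeightedShift

variable {w : ℕ → ℂ} {B : H2 →L[ℂ] H2}

theorem pow_apply_Phi (hB : IsWeightedShift w B) (i n : ℕ) :
    (B ^ i) (Phi n) = (∏ j ∈ range i, w (n + j)) • Phi (n + i) := by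
  induction i generalizing n with
  | zero => simp
  | succ i ih =>
    rw [pow_succ, mul_apply_eq_comp, hB n, map_smul, ih, smul_smul, prod_range_succ', mul_comm]
    simp only [add_zero, add_assoc, add_comm 1]

theorem sum_smul_pow_apply_Phi_apply (hB : IsWeightedShift w B) (s : Finset ℕ) (c : ℕ → ℂ)
    (n j : ℕ) :
    (∑ i ∈ s, c i • B ^ i) (Phi n) j
      = ∑ i ∈ s, if j = n + i then c i * ∏ l ∈ range i, w (n + l) else 0 := by
  simp only [_root_.sum_apply, smul_apply, hB.pow_apply_Phi, smul_smul, lp.coeFn_sum,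
    Finset.sum_apply, lp.coeFn_smul, Pi.smul_apply, Phi_apply, smul_eq_mul, mul_ite, mul_one,
    mul_zero]

theorem sum_smul_pow_apply_Phi_apply_add (hB : IsWeightedShift w B) {s : Finset ℕ} {k : ℕ}
    (hk : k ∈ s) (c : ℕ → ℂ) (n : ℕ) :
    (∑ i ∈ s, c i • B ^ i) (Phi n) (n + k) = c k * ∏ l ∈ range k, w (n + l) := by
  simp only [hB.sum_smul_pow_apply_Phi_apply, add_right_inj, sum_ite_eq, if_pos hk]

theorem sum_smul_pow_apply_Phi_apply_of_le (hB : IsWeightedShift w B) {s : Finset ℕ}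
    (hs : 0 ∉ s) (c : ℕ → ℂ) {n j : ℕ} (hj : j ≤ n) :
    (∑ i ∈ s, c i • B ^ i) (Phi n) j = 0 := by
  rw [hB.sum_smul_pow_apply_Phi_apply]
  refine sum_eq_zero fun i hi => if_neg ?_
  have : i ≠ 0 := fun h => hs (h ▸ hi)
  omega

theorem le_norm_sub_sum_smul_pow_apply_Phi (hB : IsWeightedShift w B) {δ : ℝ} (hδ : 0 ≤ δ)
    (hw : ∀ n, δ ≤ ‖w n‖) {s : Finset ℕ} (hs : 0 ∉ s) {k : ℕ} (hk : k ∈ s) (c : ℕ → ℂ)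
    {n m : ℕ} (hnm : n + k ≤ m) :
    ‖c k‖ * δ ^ k
      ≤ ‖(∑ i ∈ s, c i • B ^ i) (Phi n) - (∑ i ∈ s, c i • B ^ i) (Phi m)‖ := by
  have hprod : δ ^ k ≤ ‖∏ l ∈ range k, w (n + l)‖ := by
    rw [norm_prod]
    simpa using prod_le_prod (s := range k) (fun _ _ => hδ) fun l _ => hw (n + l)
  calc ‖c k‖ * δ ^ k ≤ ‖c k * ∏ l ∈ range k, w (n + l)‖ := by
        rw [norm_mul]; gcongr
    _ = ‖((∑ i ∈ s, c i • B ^ i) (Phi n) - (∑ i ∈ s, c i • B ^ i) (Phi m)) (n + k)‖ := by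
        rw [lp.coeFn_sub, Pi.sub_apply, hB.sum_smul_pow_apply_Phi_apply_add hk,
          hB.sum_smul_pow_apply_Phi_apply_of_le hs c hnm, sub_zero]
    _ ≤ _ := lp.norm_apply_le_norm two_ne_zero _ _

theorem not_isCompactOperator_sum_smul_pow (hB : IsWeightedShift w B) {δ : ℝ} (hδ : 0 < δ)
    (hw : ∀ n, δ ≤ ‖w n‖) {s : Finset ℕ} (hs : 0 ∉ s) {k : ℕ} (hk : k ∈ s) {c : ℕ → ℂ}
    (hck : c k ≠ 0) :
    ¬ IsCompactOperator ⇑(∑ i ∈ s, c i • B ^ i) := by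
  intro hT
  have hk0 : 0 < k := Nat.pos_of_ne_zero fun h => hs (h ▸ hk)
  refine hT.not_forall_le_dist_apply (x := fun j => Phi (j * k)) ?_
    (by positivity : 0 < ‖c k‖ * δ ^ k) fun i j hij => ?_
  · refine (Metric.isBounded_closedBall (x := 0) (r := 1)).subset ?_
    rintro _ ⟨j, rfl⟩
    simp [norm_Phi]
  · rw [dist_eq_norm]
    exact hB.le_norm_sub_sum_smul_pow_apply_Phi hδ.le hw hs hk c (by nlinarith)

end IsWeightedShift

theorem one_le_sqrt_one_sub_pow_div_one_sub {q : ℝ} (hq0 : 0 ≤ q) (hq1 : q < 1) (n : ℕ) :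
    1 ≤ Real.sqrt ((1 - q ^ (n + 1)) / (1 - q)) := by
  have : q ^ (n + 1) ≤ q := pow_le_of_le_one hq0 hq1.le n.succ_ne_zero
  rw [Real.one_le_sqrt, one_le_div (by linarith)]
  linarith

/-- For every positive integer `k` and scalars `c_1, …, c_k` with `c_1 = 1` and
`c_k ≠ 0`, the operator `c_1 B + c_2 B² + ⋯ + c_k B^k` is not compact. -/
theorem stmt_13 (q : ℝ) (hq0 : 0 < q) (hq1 : q < 1)
    (B : H2 →L[ℂ] H2)
    (hB : ∀ n : ℕ, B (Phi n) = (Real.sqrt ((1 - q ^ (n + 1)) / (1 - q)) : ℂ) • Phi (n + 1)) :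
    ∀ (k : ℕ), 0 < k → ∀ c : ℕ → ℂ, c 1 = 1 → c k ≠ 0 →
      ¬ IsCompactOperator (⇑(∑ i ∈ Finset.Icc 1 k, c i • B ^ i)) := by
  intro k hk c _ hck
  have hw : ∀ n, 1 ≤ ‖(Real.sqrt ((1 - q ^ (n + 1)) / (1 - q)) : ℂ)‖ := fun n => by
    rw [Complex.norm_real, Real.norm_of_nonneg (Real.sqrt_nonneg _)]
    exact one_le_sqrt_one_sub_pow_div_one_sub hq0.le hq1 n
  exact IsWeightedShift.not_isCompactOperator_sum_smul_pow hB one_pos hw (by simp)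
    (mem_Icc.mpr ⟨hk, le_rfl⟩) hck

end
end

section
/- For every X ∈ 𝔈(q) and every n ∈ ℕ, there exists a sequence (Y_m)_{m∈ℕ} of elements of the Lie subalgebra of the bounded operators on H generated by {A, B} (i.e., of Lie polynomials in A, B) such that X Φ_n = Σ_{m=0}^∞ Y_m Φ_n, the series converging in the norm of H. -/
open Filter Topology

noncomputable section

attribute [local instance] LieRing.ofAssociativeRing

/-!
The commutator `D = ⁅A, B⁆` is diagonal, `D Φₖ = qᵏ Φₖ`, and `q`-commutes with the shifts:
`D B = q B D` and `D A = q⁻¹ A D`. Hence `⁅D, X⁆ = (c - 1) X D` and `⁅X, Xˡ D⁆ = (1 - c) Xˡ⁺¹ D`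
for `(X, c) = (B, q)` or `(A, q⁻¹)`, so every `Xˡ D` with `l ≥ 1` is a Lie polynomial in `A, B`.
Since `T Φₙ = q⁻ⁿ (T D) Φₙ`, each element of `𝔈(q)` agrees on `Φₙ` with a single Lie polynomial,
and the series can be taken with one nonzero term.
-/

theorem LieSubalgebra.pow_succ_mul_mem_of_mul_eq_smul_mul {𝕜 R : Type*} [Field 𝕜] [Ring R]
    [Algebra 𝕜 R] (K : LieSubalgebra 𝕜 R) {X D : R} {c : 𝕜} (hX : X ∈ K) (hD : D ∈ K) (hc : c ≠ 1) (hDX : D * X = c • (X * D)) (l : ℕ) :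
    X ^ (l + 1) * D ∈ K := by
  induction l with
  | zero =>
    have h : ⁅D, X⁆ = (c - 1) • (X * D) := by
      rw [Ring.lie_def, hDX, sub_smul, one_smul]
    rw [pow_one, ← inv_smul_smul₀ (sub_ne_zero.2 hc) (X * D), ← h]
    exact K.smul_mem _ (K.lie_mem hD hX)
  | succ l ih =>
    have h : ⁅X, X ^ (l + 1) * D⁆ = (1 - c) • (X ^ (l + 2) * D) := by
      rw [Ring.lie_def, mul_assoc _ D X, hDX, mul_smul_comm, ← mul_assoc, ← mul_assoc,
        ← pow_succ, ← pow_succ', sub_smul, one_smul]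
    rw [← inv_smul_smul₀ (sub_ne_zero.2 hc.symm) (X ^ (l + 2) * D), ← h]
    exact K.smul_mem _ (K.lie_mem hX ih)

theorem exists_mem_apply_eq_of_mem_span {𝕜 E F : Type*} [NormedField 𝕜]
    [NormedAddCommGroup E] [NormedSpace 𝕜 E] [NormedAddCommGroup F] [NormedSpace 𝕜 F]
    (L : Submodule 𝕜 (E →L[𝕜] F)) (x : E) {S : Set (E →L[𝕜] F)}
    (hS : ∀ T ∈ S, ∃ Y ∈ L, Y x = T x) {X : E →L[𝕜] F} (hX : X ∈ Submodule.span 𝕜 S) :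
    ∃ Y ∈ L, Y x = X x := by
  induction hX using Submodule.span_induction with
  | mem T hT => exact hS T hT
  | zero => exact ⟨0, L.zero_mem, rfl⟩
  | add T T' _ _ ih ih' =>
    obtain ⟨Y, hY, hYT⟩ := ih
    obtain ⟨Y', hY', hYT'⟩ := ih'
    exact ⟨Y + Y', L.add_mem hY hY', by simp [hYT, hYT']⟩
  | smul a T _ ih =>
    obtain ⟨Y, hY, hYT⟩ := ih
    exact ⟨a • Y, L.smul_mem a hY, by simp [hYT]⟩

theorem H2.ext_Phi {S T : H2 →L[ℂ] H2} (h : ∀ n, S (Phi n) = T (Phi n)) : S = T := by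
  ext1 f
  have hf : HasSum (fun n => f n • Phi n) f := by
    simpa [Phi, ← lp.single_smul] using lp.hasSum_single ENNReal.ofNat_ne_top f
  exact (hf.mapL S).unique (by simpa only [Function.comp_def, map_smul, h] using hf.mapL T)

section Shifts

variable {D : H2 →L[ℂ] H2} {c : ℂ} {w : ℕ → ℂ}

theorem diag_mul_shiftUp_eq (hD : ∀ n, D (Phi n) = c ^ n • Phi n) {B : H2 →L[ℂ] H2}
    (hB : ∀ n, B (Phi n) = w n • Phi (n + 1)) : D * B = c • (B * D) :=
  H2.ext_Phi fun n => by
    simp only [mul_apply_eq_comp, smul_apply, hB, hD, map_smul, smul_smul, pow_succ]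
    ring_nf

theorem shiftDown_mul_diag_eq (hD : ∀ n, D (Phi n) = c ^ n • Phi n) {A : H2 →L[ℂ] H2}
    (hA0 : A (Phi 0) = 0) (hA : ∀ n, A (Phi (n + 1)) = w n • Phi n) :
    c • (D * A) = A * D :=
  H2.ext_Phi fun n => by
    cases n with
    | zero => simp [hA0, hD]
    | succ n =>
      simp only [mul_apply_eq_comp, smul_apply, hA, hD, map_smul, smul_smul, pow_succ]
      ring_nf

end Shifts

theorem ofReal_sqrt_mul_self {x : ℝ} (hx : 0 ≤ x) : ((√x : ℝ) : ℂ) * (√x : ℝ) = x := by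
  rw [← Complex.ofReal_mul, Real.mul_self_sqrt hx]

theorem lie_apply_Phi {q : ℝ} (hq0 : 0 ≤ q) (hq1 : q < 1) {A B : H2 →L[ℂ] H2}
    (hB : ∀ n : ℕ, B (Phi n) = (Real.sqrt ((1 - q ^ (n + 1)) / (1 - q)) : ℂ) • Phi (n + 1))
    (hA0 : A (Phi 0) = 0)
    (hA : ∀ n : ℕ, A (Phi (n + 1)) = (Real.sqrt ((1 - q ^ (n + 1)) / (1 - q)) : ℂ) • Phi n)
    (k : ℕ) : ⁅A, B⁆ (Phi k) = (q : ℂ) ^ k • Phi k := by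
  have hq : 1 - q ≠ 0 := sub_ne_zero.2 hq1.ne'
  have hnum : ∀ n : ℕ, 0 ≤ (1 - q ^ n) / (1 - q) := fun n =>
    div_nonneg (sub_nonneg.2 (pow_le_one₀ hq0 hq1.le)) (sub_nonneg.2 hq1.le)
  rw [Ring.lie_def, sub_apply, mul_apply_eq_comp, mul_apply_eq_comp, hB, map_smul, hA,
    smul_smul, ofReal_sqrt_mul_self (hnum _)]
  cases k with
  | zero =>
    rw [hA0, map_zero, sub_zero, zero_add, pow_one, div_self hq]
    simp
  | succ k =>
    rw [hA, map_smul, hB, smul_smul, ofReal_sqrt_mul_self (hnum _), ← sub_smul,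
      ← Complex.ofReal_sub]
    have h : (1 - q ^ (k + 1 + 1)) / (1 - q) - (1 - q ^ (k + 1)) / (1 - q) = q ^ (k + 1) := by
      field_simp
      ring
    rw [h, Complex.ofReal_pow]

/-- For every `X ∈ 𝔈(q)` (the span of `{I} ∪ {A^l, B^l : l ≥ 2}`) and every `n ∈ ℕ`,
there is a sequence `(Y_m)` of Lie polynomials in `A, B` (elements of the Lie
subalgebra generated by `{A, B}`) such that `X Φ_n = Σ_{m=0}^∞ Y_m Φ_n`, the series
converging in the norm of `H`. -/
theorem stmt_18 (q : ℝ) (hq0 : 0 < q) (hq1 : q < 1)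
    (A B : H2 →L[ℂ] H2)
    (hB : ∀ n : ℕ, B (Phi n) = (Real.sqrt ((1 - q ^ (n + 1)) / (1 - q)) : ℂ) • Phi (n + 1))
    (hA0 : A (Phi 0) = 0)
    (hA : ∀ n : ℕ, A (Phi (n + 1)) = (Real.sqrt ((1 - q ^ (n + 1)) / (1 - q)) : ℂ) • Phi n) :
    ∀ X ∈ Submodule.span ℂ ({(1 : H2 →L[ℂ] H2)} ∪
        {T : H2 →L[ℂ] H2 | ∃ l : ℕ, 2 ≤ l ∧ (T = A ^ l ∨ T = B ^ l)}),
      ∀ n : ℕ, ∃ Y : ℕ → (H2 →L[ℂ] H2),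
        (∀ m : ℕ, Y m ∈ LieSubalgebra.lieSpan ℂ (H2 →L[ℂ] H2) {A, B}) ∧
        Tendsto (fun N : ℕ => ∑ m ∈ Finset.range N, (Y m) (Phi n)) atTop
          (𝓝 (X (Phi n))) := by
  set L := LieSubalgebra.lieSpan ℂ (H2 →L[ℂ] H2) {A, B}
  have hAL : A ∈ L := LieSubalgebra.subset_lieSpan (by simp)
  have hBL : B ∈ L := LieSubalgebra.subset_lieSpan (by simp)
  have hq : (q : ℂ) ≠ 0 := by exact_mod_cast hq0.ne'
  have hq1' : (q : ℂ) ≠ 1 := by exact_mod_cast hq1.ne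
  have hD := lie_apply_Phi hq0.le hq1 hB hA0 hA
  set D := ⁅A, B⁆
  have hDL : D ∈ L := L.lie_mem hAL hBL
  have hDB : D * B = (q : ℂ) • (B * D) := diag_mul_shiftUp_eq hD hB
  have hDA : D * A = (q : ℂ)⁻¹ • (A * D) := by
    rw [← shiftDown_mul_diag_eq hD hA0 hA, inv_smul_smul₀ hq]
  have hgen : ∀ T ∈ ({1} ∪ {T | ∃ l : ℕ, 2 ≤ l ∧ (T = A ^ l ∨ T = B ^ l)} : Set _),
      T * D ∈ L := by
    rintro T (rfl | ⟨l, hl, rfl | rfl⟩)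
    · rwa [one_mul]
    all_goals obtain ⟨k, rfl⟩ := Nat.exists_eq_add_of_le' (one_le_two.trans hl)
    · exact L.pow_succ_mul_mem_of_mul_eq_smul_mul hAL hDL (inv_ne_one.2 hq1') hDA k
    · exact L.pow_succ_mul_mem_of_mul_eq_smul_mul hBL hDL hq1' hDB k
  have hagree : ∀ T, T * D ∈ L → ∀ n, ∃ Y ∈ L.toSubmodule, Y (Phi n) = T (Phi n) :=
    fun T hT n => ⟨((q : ℂ) ^ n)⁻¹ • (T * D), L.smul_mem _ hT, by
      rw [smul_apply, mul_apply_eq_comp, hD, map_smul, smul_smul,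
        inv_mul_cancel₀ (pow_ne_zero _ hq), one_smul]⟩
  intro X hX n
  obtain ⟨Y, hYL, hY⟩ := exists_mem_apply_eq_of_mem_span L.toSubmodule (Phi n)
    (fun T hT => hagree T (hgen T hT) n) hX
  refine ⟨fun m => if m = 0 then Y else 0, fun m => ?_, ?_⟩
  · dsimp only
    split_ifs
    exacts [hYL, L.zero_mem]
  · rw [← hY]
    refine HasSum.tendsto_sum_nat ?_
    convert hasSum_ite_eq 0 (Y (Phi n)) using 2 with m
    dsimp only
    split_ifs <;> rfl

end
end
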